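/- A d-dimensional shift X is an isolated point of the space S^d (with the Hausdorff metric δ_H) if and only if X is of finite type, X has only finitely many maximal subsystems, and X has no outcast (i.e. every proper subsystem of X is contained in a maximal subsystem of X). -/

import Mathlib

/-- The group `ℤ^d`. -/
abbrev ZD (d : ℕ) := Fin d → ℤ

/-- A configuration is a map `ℤ^d → ℤ`. -/
abbrev Config (d : ℕ) := ZD d → ℤ

/-- The shift map `σ^u`, defined by `σ^u(x)_v = x_{u+v}`. -/
def shiftMap {d : ℕ} (u : ZD d) (x : Config d) : Config d := fun v => x (u + v)

/-- The sup norm `‖·‖_∞` on `ℤ^d`, valued in `ℕ`. -/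
def normInf {d : ℕ} (n : ZD d) : ℕ := Finset.univ.sup fun i => (n i).natAbs

open Classical in
/-- The metric `δ` on configurations: `δ(x,y) = 2^{-min{‖n‖_∞ : x_n ≠ y_n}}`, `δ(x,x) = 0`. -/
noncomputable def deltaDist {d : ℕ} (x y : Config d) : ℝ :=
  if x = y then 0
  else (2 : ℝ) ^ (-((sInf {m : ℕ | ∃ n : ZD d, normInf n = m ∧ x n ≠ y n} : ℕ) : ℤ))

/-- The closure of a set of configurations with respect to the metric `δ`. -/
def deltaClosure {d : ℕ} (A : Set (Config d)) : Set (Config d) :=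
  {x | ∀ ε : ℝ, 0 < ε → ∃ a ∈ A, deltaDist x a < ε}

/-- A set of configurations is closed for `δ` when it contains all its limit points. -/
def IsDeltaClosed {d : ℕ} (A : Set (Config d)) : Prop := deltaClosure A ⊆ A

/-- A `d`-dimensional shift: a nonempty set of configurations over a common finite
alphabet, closed for `δ` and invariant under every shift map. -/
def IsShift {d : ℕ} (X : Set (Config d)) : Prop :=
  X.Nonempty ∧ (∃ A : Finset ℤ, ∀ x ∈ X, ∀ v : ZD d, x v ∈ A) ∧ IsDeltaClosed X ∧
    ∀ u : ZD d, ∀ x ∈ X, shiftMap u x ∈ X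

/-- The Hausdorff metric `δ_H` on the space of shifts. -/
noncomputable def deltaH {d : ℕ} (X Z : Set (Config d)) : ℝ :=
  max (⨆ x : X, ⨅ z : Z, deltaDist (x : Config d) (z : Config d))
      (⨆ z : Z, ⨅ x : X, deltaDist (x : Config d) (z : Config d))

/-- A subsystem of a shift `X`: a nonempty closed shift-invariant subset of `X`. -/
def IsSubsystem {d : ℕ} (Z X : Set (Config d)) : Prop :=
  Z.Nonempty ∧ Z ⊆ X ∧ IsDeltaClosed Z ∧ ∀ u : ZD d, ∀ z ∈ Z, shiftMap u z ∈ Z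

/-- A maximal subsystem of `X`: a proper subsystem such that any subsystem strictly
between it and `X` equals `X`. -/
def IsMaximalSubsystem {d : ℕ} (Z X : Set (Config d)) : Prop :=
  IsSubsystem Z X ∧ Z ≠ X ∧ ∀ Z', IsSubsystem Z' X → Z ⊂ Z' → Z' = X

/-- An outcast of `X`: a proper subsystem contained in no maximal subsystem of `X`. -/
def IsOutcast {d : ℕ} (Z X : Set (Config d)) : Prop :=
  IsSubsystem Z X ∧ Z ≠ X ∧ ∀ M, IsMaximalSubsystem M X → ¬ Z ⊆ M

/-- A pattern with finite support `U` (given by the values of `p` on `U`) appears in the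
configuration `x`. -/
def PatternAppears {d : ℕ} (U : Finset (ZD d)) (p : ZD d → ℤ) (x : Config d) : Prop :=
  ∃ u : ZD d, ∀ v ∈ U, x (u + v) = p v

/-- The set of configurations over the alphabet `A` avoiding every pattern in `F`. -/
def XofF {d : ℕ} (A : Finset ℤ) (F : Set (Finset (ZD d) × (ZD d → ℤ))) : Set (Config d) :=
  {x | (∀ v : ZD d, x v ∈ A) ∧ ∀ q ∈ F, ¬ PatternAppears q.1 q.2 x}

/-- A shift of finite type: defined by a finite alphabet and a finite set of forbidden
patterns. -/
def IsSFT {d : ℕ} (X : Set (Config d)) : Prop :=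
  ∃ (A : Finset ℤ) (F : Finset (Finset (ZD d) × (ZD d → ℤ))), X = XofF A (F : Set _)

/-- `X` is an isolated point of the subspace `S` (with the Hausdorff metric `δ_H`). -/
def IsolatedIn {d : ℕ} (S : Set (Set (Config d))) (X : Set (Config d)) : Prop :=
  X ∈ S ∧ ∃ ε : ℝ, 0 < ε ∧ ∀ Z ∈ S, deltaH X Z < ε → Z = X

/-- The orbit of a configuration under the shift action. -/
def orbit {d : ℕ} (x : Config d) : Set (Config d) := {y | ∃ u : ZD d, y = shiftMap u x}

/-- A shift is transitive when some point has dense orbit. -/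
def IsTransitive {d : ℕ} (X : Set (Config d)) : Prop :=
  IsShift X ∧ ∃ x ∈ X, X ⊆ deltaClosure (orbit x)

/-- A shift is minimal when its only subsystem is itself. -/
def IsMinimalShift {d : ℕ} (X : Set (Config d)) : Prop :=
  IsShift X ∧ ∀ Z, IsSubsystem Z X → Z = X

/-!
Two shifts are at Hausdorff distance less than `2^{-k}` exactly when they have the same central
`k`-box patterns, so `X` is isolated iff, for some `k`, it is the only shift with its set of
`k`-patterns. Such an `X` is cut out by forbidding the finitely many `k`-patterns it lacks. Each
maximal subsystem lacks one of the finitely many `k`-patterns of `X`, and no pattern is lacked by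
two of them, since two distinct maximal subsystems cover `X`. The closure of a chain of proper
subsystems is not `X`, because a single member would already carry all `k`-patterns of `X`, so
Zorn's lemma leaves no outcast. Conversely, choose `k` beyond the supports of the forbidden
patterns and so large that each of the finitely many maximal subsystems lacks a `k`-pattern of `X`:
a shift with the `k`-patterns of `X` lies in `X`, and if it were proper it would lie in a maximal
subsystem, which would then carry them all.
-/

open Set

variable {d : ℕ}

noncomputable def box (d k : ℕ) : Finset (ZD d) :=
  Fintype.piFinset fun _ => Finset.Icc (-(k : ℤ)) k

lemma mem_box {k : ℕ} {n : ZD d} : n ∈ box d k ↔ normInf n ≤ k := by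
  simp only [box, Fintype.mem_piFinset, Finset.mem_Icc, normInf, Finset.sup_le_iff,
    Finset.mem_univ, true_imp_iff]
  exact forall_congr' fun i => by omega

lemma box_mono {k k' : ℕ} (h : k ≤ k') : box d k ⊆ box d k' :=
  fun _ hn => mem_box.2 ((mem_box.1 hn).trans h)

lemma zero_mem_box (k : ℕ) : (0 : ZD d) ∈ box d k := by
  simp [mem_box, normInf]

lemma add_mem_box {k : ℕ} (u : ZD d) {n : ZD d} (hn : n ∈ box d k) :
    u + n ∈ box d (k + normInf u) := by
  rw [mem_box] at hn ⊢
  refine Finset.sup_le fun i _ => ?_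
  have hui : (u i).natAbs ≤ normInf u :=
    Finset.le_sup (f := fun i => (u i).natAbs) (Finset.mem_univ i)
  have hni : (n i).natAbs ≤ normInf n :=
    Finset.le_sup (f := fun i => (n i).natAbs) (Finset.mem_univ i)
  have := Int.natAbs_add_le (u i) (n i)
  simp only [Pi.add_apply]
  omega

section Metric

lemma deltaDist_nonneg (x y : Config d) : 0 ≤ deltaDist x y := by
  unfold deltaDist; split_ifs <;> positivity

lemma deltaDist_le_one (x y : Config d) : deltaDist x y ≤ 1 := by
  unfold deltaDist; split_ifs
  · exact zero_le_one
  · exact zpow_le_one_of_nonpos₀ one_le_two (by omega)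

lemma deltaDist_comm (x y : Config d) : deltaDist x y = deltaDist y x := by
  unfold deltaDist
  by_cases h : x = y
  · simp [h]
  · rw [if_neg h, if_neg (Ne.symm h)]
    simp_rw [ne_comm]

lemma le_deltaDist_of_ne {x y : Config d} {n : ZD d} (h : x n ≠ y n) :
    (2 : ℝ) ^ (-(normInf n : ℤ)) ≤ deltaDist x y := by
  rw [deltaDist, if_neg fun hxy => h (congrFun hxy n)]
  have : sInf {m | ∃ n : ZD d, normInf n = m ∧ x n ≠ y n} ≤ normInf n :=
    Nat.sInf_le ⟨n, rfl, h⟩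
  exact zpow_le_zpow_right₀ one_le_two (by omega)

lemma deltaDist_le_of_eqOn {x y : Config d} {k : ℕ} (h : EqOn x y (box d k)) :
    deltaDist x y ≤ (2 : ℝ) ^ (-((k : ℤ) + 1)) := by
  rw [deltaDist]
  split_ifs with hxy
  · positivity
  obtain ⟨n, hn⟩ := Function.ne_iff.1 hxy
  obtain ⟨m, hm_eq, hm⟩ :=
    Nat.sInf_mem (⟨_, n, rfl, hn⟩ : {m | ∃ n : ZD d, normInf n = m ∧ x n ≠ y n}.Nonempty)
  have : k < normInf m := lt_of_not_ge fun hle => hm (h (mem_box.2 hle))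
  rw [← hm_eq]
  exact zpow_le_zpow_right₀ one_le_two (by omega)

lemma deltaDist_lt_two_zpow_iff {x y : Config d} {k : ℕ} :
    deltaDist x y < (2 : ℝ) ^ (-(k : ℤ)) ↔ EqOn x y (box d k) := by
  refine ⟨fun h n hn => ?_, fun h => ?_⟩
  · by_contra hne
    refine (le_deltaDist_of_ne hne).not_gt (h.trans_le ?_)
    exact zpow_le_zpow_right₀ one_le_two (by have := mem_box.1 hn; omega)
  · exact (deltaDist_le_of_eqOn h).trans_lt (zpow_lt_zpow_right₀ one_lt_two (by omega))

lemma exists_two_zpow_lt {ε : ℝ} (hε : 0 < ε) :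
    ∃ k : ℕ, (2 : ℝ) ^ (-(k : ℤ)) < ε := by
  obtain ⟨k, hk⟩ := exists_pow_lt_of_lt_one hε (by norm_num : (2⁻¹ : ℝ) < 1)
  exact ⟨k, by rwa [zpow_neg, zpow_natCast, ← inv_pow]⟩

end Metric

section Closure

lemma mem_deltaClosure_iff {A : Set (Config d)} {x : Config d} :
    x ∈ deltaClosure A ↔ ∀ k, ∃ a ∈ A, EqOn x a (box d k) := by
  refine ⟨fun h k => ?_, fun h ε hε => ?_⟩
  · obtain ⟨a, ha, hxa⟩ := h _ (zpow_pos two_pos (-(k : ℤ)))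
    exact ⟨a, ha, deltaDist_lt_two_zpow_iff.1 hxa⟩
  · obtain ⟨k, hk⟩ := exists_two_zpow_lt hε
    obtain ⟨a, ha, hxa⟩ := h k
    exact ⟨a, ha, (deltaDist_lt_two_zpow_iff.2 hxa).trans hk⟩

lemma subset_deltaClosure (A : Set (Config d)) : A ⊆ deltaClosure A :=
  fun x hx => mem_deltaClosure_iff.2 fun _ => ⟨x, hx, eqOn_refl _ _⟩

lemma deltaClosure_mono {A B : Set (Config d)} (h : A ⊆ B) : deltaClosure A ⊆ deltaClosure B :=
  fun _ hx ε hε => (hx ε hε).imp fun _ ha => ⟨h ha.1, ha.2⟩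

lemma isDeltaClosed_deltaClosure (A : Set (Config d)) : IsDeltaClosed (deltaClosure A) := by
  refine fun x hx => mem_deltaClosure_iff.2 fun k => ?_
  obtain ⟨b, hb, hxb⟩ := mem_deltaClosure_iff.1 hx k
  obtain ⟨a, ha, hba⟩ := mem_deltaClosure_iff.1 hb k
  exact ⟨a, ha, hxb.trans hba⟩

lemma deltaClosure_union_subset (A B : Set (Config d)) :
    deltaClosure (A ∪ B) ⊆ deltaClosure A ∪ deltaClosure B := by
  refine fun x hx => or_iff_not_imp_left.2 fun hxA => mem_deltaClosure_iff.2 fun k => ?_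
  obtain ⟨k₀, hk₀⟩ : ∃ k₀, ∀ a ∈ A, ¬EqOn x a (box d k₀) := by
    simpa [mem_deltaClosure_iff] using hxA
  obtain ⟨c, hc, hxc⟩ := mem_deltaClosure_iff.1 hx (max k k₀)
  refine ⟨c, hc.resolve_left fun hcA => hk₀ c hcA ?_, hxc.mono (box_mono (le_max_left _ _))⟩
  exact hxc.mono (box_mono (le_max_right _ _))

lemma shiftMap_mem_deltaClosure {A : Set (Config d)} (hA : ∀ u, ∀ a ∈ A, shiftMap u a ∈ A)
    (u : ZD d) {x : Config d} (hx : x ∈ deltaClosure A) : shiftMap u x ∈ deltaClosure A := by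
  refine mem_deltaClosure_iff.2 fun k => ?_
  obtain ⟨a, ha, hxa⟩ := mem_deltaClosure_iff.1 hx (k + normInf u)
  exact ⟨shiftMap u a, hA u a ha, fun n hn => hxa (add_mem_box u hn)⟩

end Closure

def centralPatterns (k : ℕ) (X : Set (Config d)) : Set (box d k → ℤ) :=
  (box d k : Set (ZD d)).domRestrict '' X

section CentralPatterns

lemma domRestrict_mem_centralPatterns_iff {k : ℕ} {A : Set (Config d)} {x : Config d} :
    (box d k : Set (ZD d)).domRestrict x ∈ centralPatterns k A ↔
      ∃ a ∈ A, EqOn a x (box d k) := by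
  simp only [centralPatterns, mem_image, domRestrict_eq_domRestrict_iff]

lemma centralPatterns_mono {k : ℕ} {A B : Set (Config d)} (h : A ⊆ B) :
    centralPatterns k A ⊆ centralPatterns k B :=
  image_mono h

lemma centralPatterns_union (k : ℕ) (A B : Set (Config d)) :
    centralPatterns k (A ∪ B) = centralPatterns k A ∪ centralPatterns k B :=
  image_union _ _ _

lemma centralPatterns_subset_of_le {k k' : ℕ} (hk : k ≤ k') {A B : Set (Config d)}
    (h : centralPatterns k' A ⊆ centralPatterns k' B) :
    centralPatterns k A ⊆ centralPatterns k B := by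
  rintro _ ⟨a, ha, rfl⟩
  obtain ⟨b, hb, hba⟩ := domRestrict_mem_centralPatterns_iff.1 (h ⟨a, ha, rfl⟩)
  exact domRestrict_mem_centralPatterns_iff.2 ⟨b, hb, hba.mono (box_mono hk)⟩

lemma finite_centralPatterns {A : Finset ℤ} {X : Set (Config d)}
    (hA : ∀ x ∈ X, ∀ v, x v ∈ A) (k : ℕ) : (centralPatterns k X).Finite :=
  (Finite.pi fun _ => A.finite_toSet).subset <| by
    rintro _ ⟨x, hx, rfl⟩ v -
    exact hA x hx v

lemma centralPatterns_deltaClosure (k : ℕ) (A : Set (Config d)) :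
    centralPatterns k (deltaClosure A) = centralPatterns k A := by
  refine (centralPatterns_mono (subset_deltaClosure A)).antisymm' ?_
  rintro _ ⟨x, hx, rfl⟩
  obtain ⟨a, ha, hxa⟩ := mem_deltaClosure_iff.1 hx k
  exact domRestrict_mem_centralPatterns_iff.2 ⟨a, ha, hxa.symm⟩

lemma subset_of_forall_centralPatterns_subset {X Z : Set (Config d)} (hZ : IsDeltaClosed Z)
    (h : ∀ k, centralPatterns k X ⊆ centralPatterns k Z) : X ⊆ Z := by
  refine fun x hx => hZ (mem_deltaClosure_iff.2 fun k => ?_)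
  obtain ⟨z, hz, hzx⟩ := domRestrict_mem_centralPatterns_iff.1 (h k ⟨x, hx, rfl⟩)
  exact ⟨z, hz, hzx.symm⟩

end CentralPatterns

section Hausdorff

lemma iSup_iInf_deltaDist_lt_iff {X Z : Set (Config d)} (hZ : Z.Nonempty) {k : ℕ} :
    (⨆ x : X, ⨅ z : Z, deltaDist (x : Config d) z) < (2 : ℝ) ^ (-(k : ℤ)) ↔
      centralPatterns k X ⊆ centralPatterns k Z := by
  have := hZ.to_subtype
  have hbdd (x : Config d) : BddBelow (range fun z : Z => deltaDist x z) :=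
    ⟨0, forall_mem_range.2 fun _ => deltaDist_nonneg _ _⟩
  refine ⟨fun h => ?_, fun h => ?_⟩
  · rintro _ ⟨x, hx, rfl⟩
    have hbdd' : BddAbove (range fun x : X => ⨅ z : Z, deltaDist (x : Config d) z) :=
      ⟨1, forall_mem_range.2 fun x => (ciInf_le (hbdd x) (Classical.arbitrary Z)).trans
        (deltaDist_le_one _ _)⟩
    obtain ⟨z, hxz⟩ := exists_lt_of_ciInf_lt ((le_ciSup hbdd' ⟨x, hx⟩).trans_lt h)
    exact domRestrict_mem_centralPatterns_iff.2
      ⟨z, z.2, (deltaDist_lt_two_zpow_iff.1 hxz).symm⟩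
  · refine (Real.iSup_le (fun x => ?_) (by positivity)).trans_lt
      (zpow_lt_zpow_right₀ one_lt_two (by omega : -((k : ℤ) + 1) < -(k : ℤ)))
    obtain ⟨z, hz, hzx⟩ := domRestrict_mem_centralPatterns_iff.1 (h ⟨x, x.2, rfl⟩)
    exact (ciInf_le (hbdd x) ⟨z, hz⟩).trans (deltaDist_le_of_eqOn hzx.symm)

lemma deltaH_lt_two_zpow_iff {X Z : Set (Config d)} (hX : X.Nonempty) (hZ : Z.Nonempty)
    {k : ℕ} :
    deltaH X Z < (2 : ℝ) ^ (-(k : ℤ)) ↔ centralPatterns k X = centralPatterns k Z := by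
  have hswap : (⨆ z : Z, ⨅ x : X, deltaDist (x : Config d) z) =
      ⨆ z : Z, ⨅ x : X, deltaDist (z : Config d) x :=
    iSup_congr fun _ => iInf_congr fun _ => deltaDist_comm _ _
  rw [deltaH, max_lt_iff, hswap, iSup_iInf_deltaDist_lt_iff hZ, iSup_iInf_deltaDist_lt_iff hX,
    subset_antisymm_iff]

end Hausdorff

section Subsystems

variable {X Z W : Set (Config d)}

lemma IsSubsystem.isShift (hZ : IsSubsystem Z X) (hX : IsShift X) : IsShift Z :=
  let ⟨A, hA⟩ := hX.2.1
  ⟨hZ.1, ⟨A, fun z hz => hA z (hZ.2.1 hz)⟩, hZ.2.2⟩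

lemma IsShift.isSubsystem_of_subset (hZ : IsShift Z) (hZX : Z ⊆ X) : IsSubsystem Z X :=
  ⟨hZ.1, hZX, hZ.2.2⟩

lemma IsSubsystem.union (hZ : IsSubsystem Z X) (hW : IsSubsystem W X) : IsSubsystem (Z ∪ W) X :=
  ⟨hZ.1.mono subset_union_left, union_subset hZ.2.1 hW.2.1,
    fun _ hx => (deltaClosure_union_subset Z W hx).imp (hZ.2.2.1 ·) (hW.2.2.1 ·),
    fun u _ hx => hx.imp (hZ.2.2.2 u _) (hW.2.2.2 u _)⟩

lemma IsMaximalSubsystem.union_eq {M M' : Set (Config d)} (hM : IsMaximalSubsystem M X)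
    (hM' : IsMaximalSubsystem M' X) (hne : M ≠ M') : M ∪ M' = X := by
  refine hM.2.2 _ (hM.1.union hM'.1) (ssubset_of_subset_not_subset subset_union_left fun h => ?_)
  have hM'M : M' ⊆ M := subset_union_right.trans h
  exact hM.2.1 (hM'.2.2 M hM.1 <|
    ssubset_of_subset_not_subset hM'M fun h' => hne (h'.antisymm hM'M))

lemma isMaximalSubsystem_of_maximal {M : Set (Config d)}
    (hM : Maximal (· ∈ {W | IsSubsystem W X ∧ W ≠ X}) M) : IsMaximalSubsystem M X :=
  ⟨hM.1.1, hM.1.2, fun _ hW hMW =>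
    by_contra fun hWX => hMW.not_subset (hM.2 ⟨hW, hWX⟩ hMW.1)⟩

lemma isSubsystem_deltaClosure_sUnion (hX : IsDeltaClosed X) {c : Set (Set (Config d))}
    (hc : ∀ W ∈ c, IsSubsystem W X) (hne : c.Nonempty) :
    IsSubsystem (deltaClosure (⋃₀ c)) X := by
  obtain ⟨W, hW⟩ := hne
  refine ⟨(hc W hW).1.mono ((subset_sUnion_of_mem hW).trans (subset_deltaClosure _)),
    fun x hx => hX (deltaClosure_mono ?_ hx), isDeltaClosed_deltaClosure _,
    fun u _ => shiftMap_mem_deltaClosure ?_ u⟩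
  · exact sUnion_subset fun W hW => (hc W hW).2.1
  · rintro u a ⟨W, hW, ha⟩
    exact ⟨W, hW, (hc W hW).2.2.2 u a ha⟩

end Subsystems

section FiniteType

lemma eventually_subset_box (s : Finset (ZD d)) : ∀ᶠ k in Filter.atTop, s ⊆ box d k :=
  Filter.eventually_atTop.2
    ⟨s.sup normInf, fun _ hk _ hv => mem_box.2 ((Finset.le_sup hv).trans hk)⟩

lemma shiftMap_zero (x : Config d) : shiftMap 0 x = x :=
  funext fun v => congrArg x (zero_add v)

lemma PatternAppears.of_shiftMap {U : Finset (ZD d)} {p : ZD d → ℤ} {x : Config d} {u : ZD d}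
    (h : PatternAppears U p (shiftMap u x)) : PatternAppears U p x :=
  let ⟨w, hw⟩ := h
  ⟨u + w, fun v hv => by simpa [shiftMap, add_assoc] using hw v hv⟩

lemma patternAppears_extend_iff {k : ℕ} {f : box d k → ℤ} {x : Config d} :
    PatternAppears (box d k) (Function.extend Subtype.val f 0) x ↔
      ∃ u, (box d k : Set (ZD d)).domRestrict (shiftMap u x) = f := by
  simp only [PatternAppears, funext_iff, Subtype.forall, domRestrict_apply, shiftMap]
  refine exists_congr fun u => forall₂_congr fun v hv => ?_
  rw [← Subtype.val_injective.extend_apply f 0 ⟨v, hv⟩]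

variable {A : Finset ℤ} {F : Set (Finset (ZD d) × (ZD d → ℤ))}

lemma isDeltaClosed_XofF : IsDeltaClosed (XofF A F) := by
  refine fun x hx => ⟨fun v => ?_, fun q hq ⟨u, hu⟩ => ?_⟩
  · obtain ⟨a, ha, hxa⟩ := mem_deltaClosure_iff.1 hx (normInf v)
    exact hxa (mem_box.2 le_rfl) ▸ ha.1 v
  · obtain ⟨k, hk⟩ := (eventually_subset_box (q.1.image (u + ·))).exists
    obtain ⟨a, ha, hxa⟩ := mem_deltaClosure_iff.1 hx k
    exact ha.2 q hq
      ⟨u, fun v hv => (hxa (hk (Finset.mem_image_of_mem _ hv))).symm.trans (hu v hv)⟩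

lemma isShift_XofF (hne : (XofF A F).Nonempty) : IsShift (XofF A F) :=
  ⟨hne, ⟨A, fun _ hx => hx.1⟩, isDeltaClosed_XofF,
    fun u _ hx => ⟨fun v => hx.1 (u + v), fun q hq h => hx.2 q hq h.of_shiftMap⟩⟩

lemma subset_XofF_of_centralPatterns_subset {k : ℕ} {Z : Set (Config d)}
    (hZ : ∀ u, ∀ z ∈ Z, shiftMap u z ∈ Z) (hF : ∀ q ∈ F, q.1 ⊆ box d k)
    (h : centralPatterns k Z ⊆ centralPatterns k (XofF A F)) : Z ⊆ XofF A F := by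
  intro z hz
  have hlocal (u : ZD d) : ∃ x ∈ XofF A F, EqOn x (shiftMap u z) (box d k) :=
    domRestrict_mem_centralPatterns_iff.1 (h ⟨_, hZ u z hz, rfl⟩)
  refine ⟨fun v => ?_, fun q hq ⟨u, hu⟩ => ?_⟩
  · obtain ⟨x, hx, hxz⟩ := hlocal v
    have : x 0 = z v := by simpa [shiftMap] using hxz (zero_mem_box k)
    exact this ▸ hx.1 0
  · obtain ⟨x, hx, hxz⟩ := hlocal u
    exact hx.2 q hq ⟨0, fun v hv => by simpa [shiftMap, hu v hv] using hxz (hF q hq hv)⟩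

end FiniteType

def IsDeterminedByPatterns (k : ℕ) (X : Set (Config d)) : Prop :=
  ∀ Z, IsShift Z → centralPatterns k Z = centralPatterns k X → Z = X

lemma isolatedIn_iff_exists_isDeterminedByPatterns {X : Set (Config d)} (hX : IsShift X) :
    IsolatedIn {Y | IsShift Y} X ↔ ∃ k, IsDeterminedByPatterns k X := by
  constructor
  · rintro ⟨-, ε, hε, hiso⟩
    obtain ⟨k, hk⟩ := exists_two_zpow_lt hε
    exact ⟨k, fun Z hZ hZX =>
      hiso Z hZ (((deltaH_lt_two_zpow_iff hX.1 hZ.1).2 hZX.symm).trans hk)⟩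
  · rintro ⟨k, hk⟩
    exact ⟨hX, _, zpow_pos two_pos _, fun Z hZ hXZ =>
      hk Z hZ ((deltaH_lt_two_zpow_iff hX.1 hZ.1).1 hXZ).symm⟩

namespace IsDeterminedByPatterns

variable {k : ℕ} {X : Set (Config d)}

lemma isSFT (hX : IsShift X) (hk : IsDeterminedByPatterns k X) : IsSFT X := by
  classical
  obtain ⟨A, hA⟩ := hX.2.1
  have hmissing : {f : box d k → ℤ | (∀ v, f v ∈ A) ∧ f ∉ centralPatterns k X}.Finite :=
    (Finite.pi fun _ => A.finite_toSet).subset fun f hf v _ => hf.1 v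
  set F := hmissing.toFinset.image
    fun f => (box d k, Function.extend Subtype.val f (0 : ZD d → ℤ))
  have hXY : X ⊆ XofF A F := by
    refine fun x hx => ⟨hA x hx, fun q hq happ => ?_⟩
    obtain ⟨f, hf, rfl⟩ := Finset.mem_image.1 hq
    obtain ⟨u, hu⟩ := patternAppears_extend_iff.1 happ
    exact (hmissing.mem_toFinset.1 hf).2 ⟨_, hX.2.2.2 u x hx, hu⟩
  have hYX : centralPatterns k (XofF A F) ⊆ centralPatterns k X := by
    rintro _ ⟨y, hy, rfl⟩
    by_contra hf
    have happ : PatternAppears (box d k)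
        (Function.extend Subtype.val ((box d k : Set (ZD d)).domRestrict y) 0) y :=
      patternAppears_extend_iff.2 ⟨0, by rw [shiftMap_zero]⟩
    exact hy.2 _ (Finset.mem_image_of_mem _ (hmissing.mem_toFinset.2 ⟨fun v => hy.1 v, hf⟩))
      happ
  exact ⟨A, F,
    (hk _ (isShift_XofF (hX.1.mono hXY)) (hYX.antisymm (centralPatterns_mono hXY))).symm⟩

lemma finite_maximal (hX : IsShift X) (hk : IsDeterminedByPatterns k X) :
    {M | IsMaximalSubsystem M X}.Finite := by
  obtain ⟨A, hA⟩ := hX.2.1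
  have hlacks : ∀ M ∈ {M | IsMaximalSubsystem M X},
      ∃ p ∈ centralPatterns k X, p ∉ centralPatterns k M := by
    intro M hM
    by_contra! h
    exact hM.2.1 (hk M (hM.1.isShift hX) ((centralPatterns_mono hM.1.2.1).antisymm h))
  choose! f hfX hfM using hlacks
  refine (finite_centralPatterns hA k).of_injOn hfX
    fun M hM M' hM' hff => by_contra fun hne => ?_
  have hmem : f M ∈ centralPatterns k (M ∪ M') := (hM.union_eq hM' hne).symm ▸ hfX M hM
  rcases centralPatterns_union k M M' ▸ hmem with h | h
  · exact hfM M hM h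
  · exact hfM M' hM' (hff ▸ h)

lemma exists_maximal_superset (hX : IsShift X) (hk : IsDeterminedByPatterns k X)
    {Z : Set (Config d)} (hZ : IsSubsystem Z X) (hZX : Z ≠ X) :
    ∃ M, IsMaximalSubsystem M X ∧ Z ⊆ M := by
  obtain ⟨A, hA⟩ := hX.2.1
  have hchain : ∀ c ⊆ {W | IsSubsystem W X ∧ W ≠ X}, IsChain (· ⊆ ·) c →
      c.Nonempty → ∃ U ∈ {W | IsSubsystem W X ∧ W ≠ X}, ∀ W ∈ c, W ⊆ U := by
    intro c hc hchain hne
    have hU := isSubsystem_deltaClosure_sUnion hX.2.2.1 (fun W hW => (hc hW).1) hne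
    refine ⟨_, ⟨hU, fun hUX => ?_⟩,
      fun W hW => (subset_sUnion_of_mem hW).trans (subset_deltaClosure _)⟩
    have hcover : centralPatterns k X ⊆ ⋃₀ (centralPatterns k '' c) := by
      rw [← hUX, centralPatterns_deltaClosure]
      exact image_sUnion.subset
    have hdir : DirectedOn (· ⊆ ·) (centralPatterns k '' c) :=
      (hchain.image_of_map_rel _ (· ⊆ ·) (centralPatterns k) fun _ _ => centralPatterns_mono)
        |>.directedOn
    obtain ⟨_, ⟨W, hW, rfl⟩, hXW⟩ := hdir.exists_mem_subset_of_finite_of_subset_sUnion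
      (hne.image _) (finite_centralPatterns hA k) hcover
    exact (hc hW).2 <|
      hk W ((hc hW).1.isShift hX) ((centralPatterns_mono (hc hW).1.2.1).antisymm hXW)
  obtain ⟨M, hZM, hM⟩ := zorn_subset_nonempty _ hchain Z ⟨hZ, hZX⟩
  exact ⟨M, isMaximalSubsystem_of_maximal hM, hZM⟩

end IsDeterminedByPatterns

lemma exists_isDeterminedByPatterns {X : Set (Config d)} (hSFT : IsSFT X)
    (hfin : {M | IsMaximalSubsystem M X}.Finite)
    (hout : ∀ Z, IsSubsystem Z X → Z ≠ X → ∃ M, IsMaximalSubsystem M X ∧ Z ⊆ M) :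
    ∃ k, IsDeterminedByPatterns k X := by
  obtain ⟨A, F, hXF⟩ := hSFT
  have hgap : ∀ M ∈ {M | IsMaximalSubsystem M X},
      ∀ᶠ k in Filter.atTop, ¬centralPatterns k X ⊆ centralPatterns k M := by
    intro M hM
    obtain ⟨k₀, hk₀⟩ : ∃ k₀, ¬centralPatterns k₀ X ⊆ centralPatterns k₀ M := by
      by_contra! h
      exact hM.2.1 (hM.1.2.1.antisymm (subset_of_forall_centralPatterns_subset hM.1.2.2.1 h))
    exact Filter.eventually_atTop.2
      ⟨k₀, fun k hk hsub => hk₀ (centralPatterns_subset_of_le hk hsub)⟩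
  obtain ⟨k, hkM, hkF⟩ := ((Filter.eventually_all_finite hfin).2 hgap).and
    ((Filter.eventually_all_finset F).2 fun q _ => eventually_subset_box q.1) |>.exists
  refine ⟨k, fun Z hZ hZX => by_contra fun hne => ?_⟩
  have hsub : Z ⊆ X := hXF ▸ subset_XofF_of_centralPatterns_subset hZ.2.2.2 hkF (hXF ▸ hZX.le)
  obtain ⟨M, hM, hZM⟩ := hout Z (hZ.isSubsystem_of_subset hsub) hne
  exact hkM M hM (hZX ▸ centralPatterns_mono hZM)

theorem isolated_iff_SFT_finitelyManyMaximal_noOutcast_general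
    (d : ℕ) (X : Set (Config d)) (hX : IsShift X) :
    IsolatedIn {Y : Set (Config d) | IsShift Y} X ↔
      IsSFT X ∧ {Z : Set (Config d) | IsMaximalSubsystem Z X}.Finite ∧
        ∀ Z : Set (Config d), IsSubsystem Z X → Z ≠ X →
          ∃ M : Set (Config d), IsMaximalSubsystem M X ∧ Z ⊆ M := by
  rw [isolatedIn_iff_exists_isDeterminedByPatterns hX]
  constructor
  · rintro ⟨k, hk⟩
    exact ⟨hk.isSFT hX, hk.finite_maximal hX, fun _ => hk.exists_maximal_superset hX⟩
  · rintro ⟨hSFT, hfin, hout⟩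
    exact exists_isDeterminedByPatterns hSFT hfin hout

/-- A `d`-dimensional shift `X` is an isolated point of the space `S^d`
(with the Hausdorff metric) iff `X` is of finite type, has finitely many maximal
subsystems, and has no outcast (every proper subsystem is contained in a maximal one). -/
theorem isolated_iff_SFT_finitelyManyMaximal_noOutcast
    (d : ℕ) (hd : 1 ≤ d) (X : Set (Config d)) (hX : IsShift X) :
    IsolatedIn {Y : Set (Config d) | IsShift Y} X ↔
      IsSFT X ∧ {Z : Set (Config d) | IsMaximalSubsystem Z X}.Finite ∧
        ∀ Z : Set (Config d), IsSubsystem Z X → Z ≠ X →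
          ∃ M : Set (Config d), IsMaximalSubsystem M X ∧ Z ⊆ M :=
  isolated_iff_SFT_finitelyManyMaximal_noOutcast_general d X hX
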